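/- Let u, w be integers with u ≥ 2 and w ≥ 2, and let B be the (u+1)×(w+1) real matrix all of whose entries equal 1 except B[1, 1] = 0 and B[u+1, w+1] = 0 (the upper-left and lower-right corners). Then the minimum of N_index(B,Π,Φ) over all contiguous row partitions Π of {1,…,u+1} in which every part has size at most u and all contiguous column partitions Φ of {1,…,w+1} in which every part has size at most w is exactly 3. -/

import Mathlib

open Finset
open scoped Classical

/-- A contiguous partition of `{0, …, m-1}` into `K` nonempty consecutive intervals,
represented by its split points `t 0 = 0 < t 1 < ⋯ < t K = m`; the `k`-th part
(for `0 ≤ k < K`) is the interval `[t k, t (k+1))`. -/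
structure ContigPartition (m : ℕ) where
  K : ℕ
  t : ℕ → ℕ
  t0 : t 0 = 0
  tK : t K = m
  mono : ∀ k < K, t k < t (k + 1)

/-- Block `(k, l)` of `A` (rows from part `k` of `P`, columns from part `l` of `Q`)
contains a nonzero entry of `A`. -/
def blockNonzero {m n : ℕ} (A : Matrix (Fin m) (Fin n) ℝ)
    (P : ContigPartition m) (Q : ContigPartition n) (k l : ℕ) : Prop :=
  ∃ i : Fin m, ∃ j : Fin n,
    P.t k ≤ (i : ℕ) ∧ (i : ℕ) < P.t (k + 1) ∧
    Q.t l ≤ (j : ℕ) ∧ (j : ℕ) < Q.t (l + 1) ∧ A i j ≠ 0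

/-- `N_index(A, P, Q)`: the number of nonzero blocks. -/
noncomputable def Nindex {m n : ℕ} (A : Matrix (Fin m) (Fin n) ℝ)
    (P : ContigPartition m) (Q : ContigPartition n) : ℕ :=
  ((Finset.range P.K ×ˢ Finset.range Q.K).filter
    (fun kl => blockNonzero A P Q kl.1 kl.2)).card

/-- `N_value(A, P, Q)`: the total number of entries in all nonzero blocks. -/
noncomputable def Nvalue {m n : ℕ} (A : Matrix (Fin m) (Fin n) ℝ)
    (P : ContigPartition m) (Q : ContigPartition n) : ℕ :=
  ∑ kl ∈ (Finset.range P.K ×ˢ Finset.range Q.K).filter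
      (fun kl => blockNonzero A P Q kl.1 kl.2),
    (P.t (kl.1 + 1) - P.t kl.1) * (Q.t (kl.2 + 1) - Q.t kl.2)

/-!
Parts of size at most `u` (resp. `w`) force at least two row parts and two column parts, so the
nonzero corners `(0, w)` and `(u, 0)` lie in two different blocks, the top-right and the
bottom-left one. The nonzero entries `(0, 1)` and `(u, w - 1)` cannot both lie in these blocks:
column `1` would be in the last column part and column `w - 1 ≥ 1` in the first. So at least
three blocks are nonzero, and cutting rows and columns after the first index attains three,
since it isolates the zero corner `(0, 0)` in a block of its own.
-/

namespace ContigPartition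

variable {m : ℕ} (P : ContigPartition m)

theorem t_strictMonoOn : StrictMonoOn P.t (Set.Iic P.K) :=
  strictMonoOn_Iic_of_lt_succ fun k hk => P.mono k hk

theorem K_ne_zero (hm : m ≠ 0) : P.K ≠ 0 := by
  intro hK
  have := P.tK
  rw [hK, P.t0] at this
  exact hm this.symm

theorem one_lt_K (hm : m ≠ 0) (hsize : ∀ k < P.K, P.t (k + 1) - P.t k < m) : 1 < P.K := by
  have hK := P.K_ne_zero hm
  by_contra! hK_le
  have hK1 : P.K = 1 := by omega
  have h := hsize 0 (by omega)
  rw [zero_add, ← hK1, P.tK, P.t0] at h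
  omega

theorem t_K_sub_one_lt (hm : m ≠ 0) : P.t (P.K - 1) < m := by
  have h := P.mono (P.K - 1) (by have := P.K_ne_zero hm; omega)
  rwa [Nat.sub_add_cancel (Nat.one_le_iff_ne_zero.2 (P.K_ne_zero hm)), P.tK] at h

/-- The index of the part containing `i` (meaningful for `i < m`). -/
noncomputable def part (i : ℕ) : ℕ :=
  Nat.findGreatest (fun k => P.t k ≤ i) (P.K - 1)

theorem part_lt (hm : m ≠ 0) (i : ℕ) : P.part i < P.K :=
  (Nat.findGreatest_le _).trans_lt (by have := P.K_ne_zero hm; omega)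

theorem t_part_le (i : ℕ) : P.t (P.part i) ≤ i :=
  Nat.findGreatest_spec (P := fun k => P.t k ≤ i) (Nat.zero_le _) (by simp [P.t0])

theorem lt_t_part_add_one {i : ℕ} (hi : i < m) : i < P.t (P.part i + 1) := by
  by_contra! h
  by_cases hlast : P.part i + 1 ≤ P.K - 1
  · exact Nat.findGreatest_is_greatest (Nat.lt_succ_self _) hlast h
  · have hK : P.part i + 1 = P.K := by have := P.part_lt (by omega) i; omega
    rw [hK, P.tK] at h
    omega

theorem part_mono : Monotone P.part := fun _ _ hij =>
  Nat.findGreatest_mono_left (fun _ hk => hk.trans hij) _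

theorem part_zero : P.part 0 = 0 :=
  Nat.findGreatest_eq_zero_iff.2 fun k hk hkK hle => by
    have := P.t_strictMonoOn (Set.mem_Iic.2 (Nat.zero_le _)) (Set.mem_Iic.2 (by omega)) hk
    rw [P.t0] at this
    omega

theorem part_eq_K_sub_one {i : ℕ} (hi : P.t (P.K - 1) ≤ i) : P.part i = P.K - 1 :=
  Nat.findGreatest_eq hi

def splitAtOne (m : ℕ) (hm : 1 < m) : ContigPartition m where
  K := 2
  t k := if k = 0 then 0 else if k = 1 then 1 else m
  t0 := rfl
  tK := rfl
  mono k hk := by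
    have : k < 2 := hk
    interval_cases k <;> simp
    omega

theorem splitAtOne_size_le {m : ℕ} (hm : 1 < m) :
    ∀ k < (splitAtOne m hm).K, (splitAtOne m hm).t (k + 1) - (splitAtOne m hm).t k ≤ m - 1 := by
  intro k hk
  have : k < 2 := hk
  interval_cases k <;> simp [splitAtOne]
  omega

end ContigPartition

open ContigPartition

section Nindex

variable {m n : ℕ} (A : Matrix (Fin m) (Fin n) ℝ) (P : ContigPartition m) (Q : ContigPartition n)

theorem blockNonzero_part {i : Fin m} {j : Fin n} (hij : A i j ≠ 0) :
    blockNonzero A P Q (P.part i) (Q.part j) :=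
  ⟨i, j, P.t_part_le i, P.lt_t_part_add_one i.2, Q.t_part_le j, Q.lt_t_part_add_one j.2, hij⟩

theorem card_image_part_le_Nindex (S : Finset (Fin m × Fin n)) (hS : ∀ e ∈ S, A e.1 e.2 ≠ 0) :
    (S.image fun e => (P.part e.1, Q.part e.2)).card ≤ Nindex A P Q := by
  refine card_le_card fun kl hkl => ?_
  obtain ⟨⟨i, j⟩, he, rfl⟩ := mem_image.1 hkl
  simp only [mem_filter, mem_product, mem_range]
  exact ⟨⟨P.part_lt (Fin.pos i).ne' _, Q.part_lt (Fin.pos j).ne' _⟩,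
    blockNonzero_part A P Q (hS _ he)⟩

theorem three_le_Nindex_of_blocks_ne (e₁ e₂ e₃ : Fin m × Fin n)
    (h₁ : A e₁.1 e₁.2 ≠ 0) (h₂ : A e₂.1 e₂.2 ≠ 0) (h₃ : A e₃.1 e₃.2 ≠ 0)
    (h₁₂ : (P.part e₁.1, Q.part e₁.2) ≠ (P.part e₂.1, Q.part e₂.2))
    (h₁₃ : (P.part e₁.1, Q.part e₁.2) ≠ (P.part e₃.1, Q.part e₃.2))
    (h₂₃ : (P.part e₂.1, Q.part e₂.2) ≠ (P.part e₃.1, Q.part e₃.2)) :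
    3 ≤ Nindex A P Q := by
  have hS : ∀ e ∈ ({e₁, e₂, e₃} : Finset _), A e.1 e.2 ≠ 0 := by
    simp only [mem_insert, mem_singleton]
    rintro e (rfl | rfl | rfl) <;> assumption
  refine le_trans (le_of_eq ?_) (card_image_part_le_Nindex A P Q _ hS)
  rw [image_insert, image_insert, image_singleton]
  exact (card_eq_three.2 ⟨_, _, _, h₁₂, h₁₃, h₂₃, rfl⟩).symm

theorem Nindex_le_of_not_blockNonzero {k l : ℕ} (hk : k < P.K) (hl : l < Q.K)
    (h : ¬ blockNonzero A P Q k l) : Nindex A P Q ≤ P.K * Q.K - 1 := by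
  have hsub : (range P.K ×ˢ range Q.K).filter (fun kl => blockNonzero A P Q kl.1 kl.2) ⊆
      (range P.K ×ˢ range Q.K).erase (k, l) := fun kl hkl => by
    obtain ⟨hmem, hnz⟩ := mem_filter.1 hkl
    exact mem_erase.2 ⟨by rintro rfl; exact h hnz, hmem⟩
  have hkl : (k, l) ∈ range P.K ×ˢ range Q.K := mem_product.2 ⟨mem_range.2 hk, mem_range.2 hl⟩
  calc Nindex A P Q ≤ ((range P.K ×ˢ range Q.K).erase (k, l)).card := card_le_card hsub
    _ = P.K * Q.K - 1 := by rw [card_erase_of_mem hkl, card_product, card_range, card_range]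

end Nindex

theorem three_le_Nindex_of_ne_zero {m n : ℕ} (A : Matrix (Fin (m + 1)) (Fin (n + 1)) ℝ)
    (P : ContigPartition (m + 1)) (Q : ContigPartition (n + 1)) (hK : 1 < P.K) (hL : 1 < Q.K)
    {j j' : Fin (n + 1)} (hjj' : j ≤ j')
    (h0n : A 0 (Fin.last n) ≠ 0) (hm0 : A (Fin.last m) 0 ≠ 0)
    (h0j : A 0 j ≠ 0) (hmj' : A (Fin.last m) j' ≠ 0) :
    3 ≤ Nindex A P Q := by
  have hPm : P.part m = P.K - 1 :=
    P.part_eq_K_sub_one (Nat.le_of_lt_succ (P.t_K_sub_one_lt m.succ_ne_zero))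
  have hQn : Q.part n = Q.K - 1 :=
    Q.part_eq_K_sub_one (Nat.le_of_lt_succ (Q.t_K_sub_one_lt n.succ_ne_zero))
  have hQjj' : Q.part j ≤ Q.part j' := Q.part_mono hjj'
  by_cases hj : Q.part j = Q.K - 1
  · refine three_le_Nindex_of_blocks_ne A P Q (0, Fin.last n) (Fin.last m, 0) (Fin.last m, j')
      h0n hm0 hmj' ?_ ?_ ?_ <;>
      simp only [Fin.val_zero, Fin.val_last, P.part_zero, Q.part_zero, hPm, hQn, ne_eq,
        Prod.mk.injEq] <;> omega
  · refine three_le_Nindex_of_blocks_ne A P Q (0, Fin.last n) (Fin.last m, 0) (0, j)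
      h0n hm0 h0j ?_ ?_ ?_ <;>
      simp only [Fin.val_zero, Fin.val_last, P.part_zero, Q.part_zero, hPm, hQn, ne_eq,
        Prod.mk.injEq] <;> omega

theorem Nindex_splitAtOne_le_three {m n : ℕ} (A : Matrix (Fin (m + 1)) (Fin (n + 1)) ℝ)
    (hm : 1 < m + 1) (hn : 1 < n + 1) (h00 : A 0 0 = 0) :
    Nindex A (splitAtOne (m + 1) hm) (splitAtOne (n + 1) hn) ≤ 3 := by
  refine Nindex_le_of_not_blockNonzero A _ _ (k := 0) (l := 0) two_pos two_pos ?_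
  rintro ⟨i, j, -, hi, -, hj, hij⟩
  have hi0 : i = 0 := Fin.ext (by simpa [splitAtOne] using hi)
  have hj0 : j = 0 := Fin.ext (by simpa [splitAtOne] using hj)
  exact hij (hi0 ▸ hj0 ▸ h00)

/-- For the `(u+1) × (w+1)` gadget matrix that is all nonzero except its
upper-left and lower-right corner entries, the minimum number of nonzero blocks
over all contiguous row partitions with parts of size at most `u` and column
partitions with parts of size at most `w` is exactly `3`. -/
theorem gadget_B2_min_blocks (u w : ℕ) (hu : 2 ≤ u) (hw : 2 ≤ w)
    (B : Matrix (Fin (u + 1)) (Fin (w + 1)) ℝ)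
    (hB : ∀ (i : Fin (u + 1)) (j : Fin (w + 1)),
      B i j = if ((i : ℕ) = 0 ∧ (j : ℕ) = 0) ∨ ((i : ℕ) = u ∧ (j : ℕ) = w)
        then 0 else 1) :
    IsLeast { x : ℕ | ∃ (P : ContigPartition (u + 1)) (Q : ContigPartition (w + 1)),
        (∀ k < P.K, P.t (k + 1) - P.t k ≤ u) ∧
        (∀ l < Q.K, Q.t (l + 1) - Q.t l ≤ w) ∧
        Nindex B P Q = x } 3 := by
  have hB_ne : ∀ (i : Fin (u + 1)) (j : Fin (w + 1)), ¬((i : ℕ) = 0 ∧ (j : ℕ) = 0) → ¬((i : ℕ) = u ∧ (j : ℕ) = w) →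
      B i j ≠ 0 := fun i j h₁ h₂ => by
    rw [hB, if_neg (not_or.2 ⟨h₁, h₂⟩)]
    exact one_ne_zero
  have lower : ∀ (P : ContigPartition (u + 1)) (Q : ContigPartition (w + 1)),
      (∀ k < P.K, P.t (k + 1) - P.t k ≤ u) → (∀ l < Q.K, Q.t (l + 1) - Q.t l ≤ w) →
      3 ≤ Nindex B P Q := fun P Q hP hQ =>
    three_le_Nindex_of_ne_zero B P Q
      (P.one_lt_K u.succ_ne_zero fun k hk => Nat.lt_succ_of_le (hP k hk))
      (Q.one_lt_K w.succ_ne_zero fun l hl => Nat.lt_succ_of_le (hQ l hl))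
      (j := ⟨1, by omega⟩) (j' := ⟨w - 1, by omega⟩) (Fin.mk_le_mk.2 (by omega))
      (hB_ne _ _ (by simp only [Fin.val_zero, Fin.val_last]; omega)
        (by simp only [Fin.val_zero, Fin.val_last]; omega))
      (hB_ne _ _ (by simp only [Fin.val_zero, Fin.val_last]; omega)
        (by simp only [Fin.val_zero, Fin.val_last]; omega))
      (hB_ne _ _ (by simp only [Fin.val_zero]; omega) (by simp only [Fin.val_zero]; omega))
      (hB_ne _ _ (by simp only [Fin.val_last]; omega) (by simp only [Fin.val_last]; omega))
  refine ⟨⟨splitAtOne (u + 1) (by omega), splitAtOne (w + 1) (by omega),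
    splitAtOne_size_le _, splitAtOne_size_le _, le_antisymm ?_ (lower _ _
      (splitAtOne_size_le _) (splitAtOne_size_le _))⟩, ?_⟩
  · exact Nindex_splitAtOne_le_three B _ _ (by simpa using hB 0 0)
  · rintro x ⟨P, Q, hP, hQ, rfl⟩
    exact lower P Q hP hQ
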